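/- Let λ be a real number with λ < −1 or λ > 1/3 (the zero-stability region). Then the quadratic factor q_λ has a complex root z with |z| ≥ 1/3, and every complex root of q_λ has modulus at most 1/3 if and only if λ = −9/5. Hence the maximum modulus of the non-unit roots of the ZeroSNet characteristic polynomial over the zero-stability region is minimized uniquely at λ = −9/5, with minimal value 1/3. -/

import Mathlib

/-!
At `λ = −9/5` the factor is `q_λ(ρ) = (ρ + 1/3)²`. For every other `λ` in the region some root
has modulus `> 1/3`: if `λ > 1/3` or `λ < −9/5`, the product of the two roots `q_λ(0) = (1+λ)/(4λ)`
exceeds `1/9`; if `−9/5 < λ < −1`, then `q_λ(−1/3) = (5λ+9)/(18λ) < 0`, so the real quadratic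
`q_λ` has a real root below `−1/3`.
-/

/-- The quadratic factor of the ZeroSNet characteristic polynomial over ℂ (real parameter λ):
`q_λ(ρ) = ρ² + ((λ−3)/(4λ))ρ + (1+λ)/(4λ)`. -/
noncomputable def zerosQuadFactor (l : ℝ) (ρ : ℂ) : ℂ :=
  ρ ^ 2 + (((l : ℂ) - 3) / (4 * (l : ℂ))) * ρ + (1 + (l : ℂ)) / (4 * (l : ℂ))

theorem Complex.exists_quadratic_root_norm_sq_ge (b c : ℂ) :
    ∃ z : ℂ, z ^ 2 + b * z + c = 0 ∧ ‖c‖ ≤ ‖z‖ ^ 2 := by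
  obtain ⟨s, hs⟩ := IsAlgClosed.exists_pow_nat_eq (b ^ 2 - 4 * c) two_pos
  have hroot : ∀ z : ℂ, z = (-b + s) / 2 ∨ z = (-b - s) / 2 → z ^ 2 + b * z + c = 0 := by
    rintro z (rfl | rfl) <;> linear_combination hs / 4
  have hprod : ‖(-b + s) / 2‖ * ‖(-b - s) / 2‖ = ‖c‖ := by
    rw [← norm_mul]; congr 1; linear_combination -hs / 4
  rcases le_total ‖(-b - s) / 2‖ ‖(-b + s) / 2‖ with h | h
  · exact ⟨_, hroot _ (.inl rfl), by nlinarith [norm_nonneg ((-b - s) / 2)]⟩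
  · exact ⟨_, hroot _ (.inr rfl), by nlinarith [norm_nonneg ((-b + s) / 2)]⟩

theorem Real.exists_quadratic_root_lt_of_neg (b c x₀ : ℝ) (h : x₀ ^ 2 + b * x₀ + c < 0) :
    ∃ x < x₀, x ^ 2 + b * x + c = 0 := by
  have hD : (2 * x₀ + b) ^ 2 < b ^ 2 - 4 * c := by nlinarith
  have hsq : √(b ^ 2 - 4 * c) ^ 2 = b ^ 2 - 4 * c := Real.sq_sqrt (by nlinarith)
  have hlt : -(2 * x₀ + b) < √(b ^ 2 - 4 * c) :=
    (Real.lt_sqrt (abs_nonneg _)).2 (by rwa [sq_abs]) |>.trans_le' (neg_le_abs _)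
  exact ⟨(-b - √(b ^ 2 - 4 * c)) / 2, by linarith, by linear_combination hsq / 4⟩

theorem zerosQuadFactor_eq (l : ℝ) (z : ℂ) :
    zerosQuadFactor l z =
      z ^ 2 + (((l - 3) / (4 * l) : ℝ) : ℂ) * z + (((1 + l) / (4 * l) : ℝ) : ℂ) := by
  unfold zerosQuadFactor; push_cast; ring

theorem zerosQuadFactor_neg_nine_fifths_eq_zero_iff (z : ℂ) :
    zerosQuadFactor (-9 / 5) z = 0 ↔ z = -1 / 3 := by
  have hsq : zerosQuadFactor (-9 / 5) z = (z + 1 / 3) ^ 2 := by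
    unfold zerosQuadFactor; push_cast; ring
  rw [hsq, sq_eq_zero_iff, add_eq_zero_iff_eq_neg, neg_div]

theorem exists_zerosQuadFactor_root_one_third_lt_norm (l : ℝ) (hl : l < -1 ∨ 1 / 3 < l)
    (hne : l ≠ -9 / 5) : ∃ z : ℂ, zerosQuadFactor l z = 0 ∧ 1 / 3 < ‖z‖ := by
  have hl0 : l ≠ 0 := by rintro rfl; norm_num at hl
  by_cases hmid : -9 / 5 < l ∧ l < -1
  · have hneg : (-1 / 3) ^ 2 + (l - 3) / (4 * l) * (-1 / 3) + (1 + l) / (4 * l) < 0 := by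
      have : (-1 / 3) ^ 2 + (l - 3) / (4 * l) * (-1 / 3) + (1 + l) / (4 * l)
          = (5 * l + 9) / (18 * l) := by field_simp; ring
      rw [this]; exact div_neg_of_pos_of_neg (by linarith) (by linarith)
    obtain ⟨x, hx, hroot⟩ := Real.exists_quadratic_root_lt_of_neg _ _ _ hneg
    refine ⟨x, ?_, ?_⟩
    · rw [zerosQuadFactor_eq]; exact_mod_cast hroot
    · rw [Complex.norm_real, Real.norm_eq_abs]; linarith [neg_le_abs x]
  · have hc : 1 / 9 < (1 + l) / (4 * l) := by
      have : (1 + l) / (4 * l) - 1 / 9 = (5 * l + 9) / (36 * l) := by field_simp; ring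
      have : 0 < (5 * l + 9) / (36 * l) := by
        rcases lt_or_gt_of_ne hne with h | h
        · exact div_pos_of_neg_of_neg (by linarith) (by linarith)
        · exact div_pos (by linarith) (by linarith [hl.resolve_left fun h' => hmid ⟨h, h'⟩])
      linarith
    obtain ⟨z, hroot, hnorm⟩ := Complex.exists_quadratic_root_norm_sq_ge
      (((l - 3) / (4 * l) : ℝ) : ℂ) (((1 + l) / (4 * l) : ℝ) : ℂ)
    refine ⟨z, by rwa [zerosQuadFactor_eq], ?_⟩
    rw [Complex.norm_real, Real.norm_eq_abs, abs_of_pos (by linarith)] at hnorm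
    nlinarith [norm_nonneg z]

theorem zerosnet_optimal_lambda (l : ℝ) (hl : l < -1 ∨ 1 / 3 < l) :
    (∃ z : ℂ, zerosQuadFactor l z = 0 ∧ 1 / 3 ≤ ‖z‖) ∧
    ((∀ z : ℂ, zerosQuadFactor l z = 0 → ‖z‖ ≤ 1 / 3) ↔ l = -9 / 5) := by
  have hlarge := exists_zerosQuadFactor_root_one_third_lt_norm l hl
  refine ⟨?_, fun hsmall => ?_, ?_⟩
  · by_cases hl95 : l = -9 / 5
    · subst hl95
      exact ⟨-1 / 3, (zerosQuadFactor_neg_nine_fifths_eq_zero_iff _).2 rfl, by norm_num⟩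
    · obtain ⟨z, hz, hlt⟩ := hlarge hl95
      exact ⟨z, hz, hlt.le⟩
  · by_contra hl95
    obtain ⟨z, hz, hlt⟩ := hlarge hl95
    exact (hsmall z hz).not_gt hlt
  · rintro rfl z hz
    rw [(zerosQuadFactor_neg_nine_fifths_eq_zero_iff z).1 hz]
    norm_num
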